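/- arXiv:1003.0666 — 2 statements merged into one kernel-verified Lean document; each statement's English description precedes it below -/
import Mathlib

section
/- For every natural number N there is a constant C, depending only on β and N, such that for every sign sequence ε : ℕ → {−1, +1}, the function F_ε(ζ) = ε_0 β_0(ζ) + ∑_{k≥1} ε_k β(2^{-k}ζ) is smooth on ℝ and satisfies sup_{0 ≤ j ≤ N} sup_{ζ ∈ ℝ} |ζ^j (d/dζ)^j F_ε(ζ)| ≤ C. In particular, the bound is uniform over all choices of signs. -/
private lemma aux_iteratedDeriv_zero_fun (n : ℕ) (x : ℝ) :
    iteratedDeriv n (fun _ : ℝ => (0 : ℝ)) x = 0 := by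
  have h : deriv (fun _ : ℝ => (0 : ℝ)) = fun _ => (0 : ℝ) := by
    funext y; simp
  rw [iteratedDeriv_eq_iterate, Function.iterate_fixed h]

private lemma aux_iteratedDeriv_sum (u : Finset ℕ) (f : ℕ → ℝ → ℝ) (n : ℕ)
    (h : ∀ i ∈ u, ContDiff ℝ n (f i)) (x : ℝ) :
    iteratedDeriv n (fun y => ∑ i ∈ u, f i y) x = ∑ i ∈ u, iteratedDeriv n (f i) x := by
  have h2 := iteratedFDeriv_sum (𝕜 := ℝ) (f := f) (u := u) (i := n) h
  simp only [iteratedDeriv_eq_iteratedFDeriv]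
  have h3 := congrFun h2 x
  simp only [Finset.sum_apply] at h3
  rw [show (fun y => ∑ i ∈ u, f i y) = (∑ j ∈ u, f j ·) from rfl, h3]
  simp

private lemma aux_iteratedDeriv_cmul (c : ℝ) {f : ℝ → ℝ} {n : ℕ} (hf : ContDiff ℝ n f) (x : ℝ) :
    iteratedDeriv n (fun y => c * f y) x = c * iteratedDeriv n f x := by
  simp only [← iteratedDerivWithin_univ]
  exact iteratedDerivWithin_const_mul (Set.mem_univ x) uniqueDiffOn_univ c hf.contDiffAt.contDiffWithinAt

private lemma aux_iteratedDeriv_cadd (c : ℝ) (f : ℝ → ℝ) {n : ℕ} (hn : 0 < n) (x : ℝ) :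
    iteratedDeriv n (fun y => c + f y) x = iteratedDeriv n f x := by
  simp only [← iteratedDerivWithin_univ]
  exact iteratedDerivWithin_const_add hn c

/-- Let `β : ℝ → ℝ` be a nonnegative smooth function supported in `(1/4, 4)` with
`∑_{k=1}^∞ β(2^{-k} ζ) = 1` for all `ζ ≥ 1`.  Set `β_k(ζ) = β(2^{-k}ζ)` for `k ≥ 1` and
`β_0 = 1 - ∑_{k ≥ 1} β_k`.  For every `N : ℕ` there is a constant `C` (depending only on
`β` and `N`) such that for any sequence of signs `ε : ℕ → ℝ`, `ε k = ±1`, the function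
`F_ε(ζ) = ε 0 * β_0(ζ) + ∑_{k ≥ 1} ε k * β(2^{-k} ζ)` is smooth and satisfies the
Mihlin-type bound `|ζ^j F_ε^{(j)}(ζ)| ≤ C` for all `0 ≤ j ≤ N` and all `ζ ∈ ℝ`,
uniformly in the choice of signs. -/
theorem mihlin_bound_randomized_littlewood_paley
    (β : ℝ → ℝ)
    (hβ_smooth : ContDiff ℝ (⊤ : ℕ∞) β)
    (hβ_nonneg : ∀ ζ : ℝ, 0 ≤ β ζ)
    (hβ_compact : HasCompactSupport β)
    (hβ_supp : Function.support β ⊆ Set.Ioo (1/4 : ℝ) 4)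
    (hβ_sum : ∀ ζ : ℝ, 1 ≤ ζ → HasSum (fun j : ℕ => β (ζ / 2 ^ (j + 1))) 1)
    (N : ℕ) :
    ∃ C : ℝ, ∀ ε : ℕ → ℝ, (∀ k, ε k = 1 ∨ ε k = -1) →
      ContDiff ℝ (⊤ : ℕ∞)
        (fun ζ : ℝ =>
          ε 0 * (1 - ∑' j : ℕ, β (ζ / 2 ^ (j + 1)))
            + ∑' j : ℕ, ε (j + 1) * β (ζ / 2 ^ (j + 1))) ∧
      ∀ j : ℕ, j ≤ N → ∀ ζ : ℝ,
        |ζ ^ j *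
          iteratedDeriv j
            (fun ζ : ℝ =>
              ε 0 * (1 - ∑' j : ℕ, β (ζ / 2 ^ (j + 1)))
                + ∑' j : ℕ, ε (j + 1) * β (ζ / 2 ^ (j + 1))) ζ| ≤ C := by
  classical
  -- β vanishes outside (1/4, 4)
  have hβ0 : ∀ x : ℝ, x ∉ Set.Ioo (1/4 : ℝ) 4 → β x = 0 := by
    intro x hx
    by_contra h
    exact hx (hβ_supp h)
  -- all iterated derivatives of β vanish outside [1/4, 4]
  have hBzero : ∀ (n : ℕ) (x : ℝ), x ∉ Set.Icc (1/4 : ℝ) 4 → iteratedDeriv n β x = 0 := by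
    intro n x hx
    have hx' : x < 1/4 ∨ 4 < x := by
      simp only [Set.mem_Icc, not_and_or, not_le] at hx
      exact hx
    have hev : β =ᶠ[nhds x] (fun _ => (0 : ℝ)) := by
      rcases hx' with h | h
      · filter_upwards [Iio_mem_nhds h] with y hy
        exact hβ0 y (fun hmem => absurd hmem.1 (not_lt.mpr hy.le))
      · filter_upwards [Ioi_mem_nhds h] with y hy
        exact hβ0 y (fun hmem => absurd hmem.2 (not_lt.mpr hy.le))
    rw [hev.iteratedDeriv_eq n, aux_iteratedDeriv_zero_fun]
  -- uniform bounds on the iterated derivatives of β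
  have hMex : ∀ n : ℕ, ∃ Mn : ℝ, (∀ x : ℝ, |iteratedDeriv n β x| ≤ Mn) ∧ 0 ≤ Mn := by
    intro n
    have hcont : Continuous (iteratedDeriv n β) :=
      hβ_smooth.continuous_iteratedDeriv n (by exact_mod_cast le_top)
    obtain ⟨Mn, hMn⟩ :=
      (isCompact_Icc (a := (1/4 : ℝ)) (b := 4)).exists_bound_of_continuousOn hcont.continuousOn
    refine ⟨max Mn 0, fun x => ?_, le_max_right _ _⟩
    by_cases hx : x ∈ Set.Icc (1/4 : ℝ) 4
    · exact le_trans (by simpa using hMn x hx) (le_max_left _ _)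
    · simp [hBzero n x hx]
  choose M hM hM0 using hMex
  set C : ℝ := 1 + 10 * ∑ n ∈ Finset.range (N + 1), 4 ^ n * M n with hCdef
  have hC1 : ∀ n : ℕ, n ≤ N → 1 + 10 * (4 ^ n * M n) ≤ C := by
    intro n hn
    have hle : 4 ^ n * M n ≤ ∑ k ∈ Finset.range (N + 1), 4 ^ k * M k :=
      Finset.single_le_sum (f := fun k => (4 : ℝ) ^ k * M k)
        (fun i _ => by have := hM0 i; positivity) (Finset.mem_range.mpr (by omega))
    rw [hCdef]
    linarith
  refine ⟨C, fun ε hε => ?_⟩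
  have hεabs : ∀ k, |ε k| ≤ 1 := fun k => by rcases hε k with h | h <;> simp [h]
  have hcabs : ∀ j, |ε (j + 1) - ε 0| ≤ 2 := fun j => by
    rcases hε (j + 1) with h | h <;> rcases hε 0 with h0 | h0 <;> norm_num [h, h0]
  set F : ℝ → ℝ := fun ζ =>
      ε 0 * (1 - ∑' j : ℕ, β (ζ / 2 ^ (j + 1))) + ∑' j : ℕ, ε (j + 1) * β (ζ / 2 ^ (j + 1))
    with hFdef
  set g : ℕ → ℝ → ℝ := fun m ζ =>
      ε 0 + ∑ j ∈ Finset.range (m + 1), (ε (j + 1) - ε 0) * β (ζ / 2 ^ (j + 1)) with hgdef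
  -- outside the window the summands vanish
  have hvan : ∀ (m : ℕ) (ζ : ℝ), ζ < 2 ^ m →
      ∀ j ∉ Finset.range (m + 1), β (ζ / 2 ^ (j + 1)) = 0 := by
    intro m ζ hζ j hj
    rw [Finset.mem_range, not_lt] at hj
    have h2 : (0 : ℝ) < 2 ^ (j + 1) := by positivity
    have hmj : (2 : ℝ) ^ (m + 2) ≤ 2 ^ (j + 1) := pow_le_pow_right₀ one_le_two (by omega)
    have h4 : (2 : ℝ) ^ (m + 2) = 4 * 2 ^ m := by ring
    have hle : ζ / 2 ^ (j + 1) ≤ 1/4 := by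
      rw [div_le_iff₀ h2]
      linarith
    exact hβ0 _ (fun hmem => absurd hmem.1 (not_lt.mpr hle))
  -- F agrees with the finite sum g m on (-∞, 2^m)
  have hFg : ∀ (m : ℕ) (ζ : ℝ), ζ < 2 ^ m → F ζ = g m ζ := by
    intro m ζ hζ
    have h1 : (∑' j : ℕ, β (ζ / 2 ^ (j + 1)))
        = ∑ j ∈ Finset.range (m + 1), β (ζ / 2 ^ (j + 1)) := tsum_eq_sum (hvan m ζ hζ)
    have h2 : (∑' j : ℕ, ε (j + 1) * β (ζ / 2 ^ (j + 1)))
        = ∑ j ∈ Finset.range (m + 1), ε (j + 1) * β (ζ / 2 ^ (j + 1)) :=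
      tsum_eq_sum (fun j hj => by rw [hvan m ζ hζ j hj, mul_zero])
    simp only [hFdef, hgdef, h1, h2, sub_mul, Finset.sum_sub_distrib]
    rw [← Finset.mul_sum]
    ring
  have hg : ∀ m : ℕ, ContDiff ℝ (⊤ : ℕ∞) (g m) := by
    intro m
    exact contDiff_const.add (ContDiff.sum fun j _ =>
      contDiff_const.mul (hβ_smooth.comp (contDiff_id.div_const _)))
  have hFs : ContDiff ℝ (⊤ : ℕ∞) F := by
    rw [contDiff_iff_contDiffAt]
    intro ζ
    obtain ⟨m, hm⟩ : ∃ m : ℕ, ζ < 2 ^ m := pow_unbounded_of_one_lt ζ one_lt_two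
    exact (hg m).contDiffAt.congr_of_eventuallyEq
      (by filter_upwards [Iio_mem_nhds hm] with y hy using hFg m y hy)
  -- formula for the iterated derivatives
  have hder : ∀ (n m : ℕ) (ζ : ℝ), ζ < 2 ^ m →
      iteratedDeriv n F ζ =
        (if n = 0 then ε 0 else 0) +
          ∑ j ∈ Finset.range (m + 1),
            (ε (j + 1) - ε 0) * (((2 : ℝ) ^ (j + 1))⁻¹ ^ n *
              iteratedDeriv n β (ζ / 2 ^ (j + 1))) := by
    intro n m ζ hζ
    have hev : F =ᶠ[nhds ζ] g m := by
      filter_upwards [Iio_mem_nhds hζ] with y hy using hFg m y hy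
    rw [hev.iteratedDeriv_eq n]
    have hterm : ∀ (j : ℕ) (x : ℝ),
        iteratedDeriv n (fun y => (ε (j + 1) - ε 0) * β (y / 2 ^ (j + 1))) x
          = (ε (j + 1) - ε 0) * (((2 : ℝ) ^ (j + 1))⁻¹ ^ n *
              iteratedDeriv n β (x / 2 ^ (j + 1))) := by
      intro j x
      have hfj : ContDiff ℝ n (fun y : ℝ => β (y / 2 ^ (j + 1))) :=
        (hβ_smooth.of_le (by exact_mod_cast le_top)).comp (contDiff_id.div_const _)
      rw [aux_iteratedDeriv_cmul _ hfj x]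
      congr 1
      have hre : (fun y : ℝ => β (y / 2 ^ (j + 1)))
          = fun y => β (((2 : ℝ) ^ (j + 1))⁻¹ * y) := by
        funext y; rw [div_eq_inv_mul]
      rw [hre, iteratedDeriv_comp_const_mul (hβ_smooth.of_le (by exact_mod_cast le_top))]
      simp only [div_eq_inv_mul]
    rcases Nat.eq_zero_or_pos n with rfl | hn
    · simp [hgdef]
    · rw [if_neg hn.ne', zero_add, hgdef]
      rw [aux_iteratedDeriv_cadd (ε 0)
        (fun y => ∑ j ∈ Finset.range (m + 1), (ε (j + 1) - ε 0) * β (y / 2 ^ (j + 1))) hn ζ]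
      have hcd : ∀ j ∈ Finset.range (m + 1),
          ContDiff ℝ n (fun y : ℝ => (ε (j + 1) - ε 0) * β (y / 2 ^ (j + 1))) := fun j _ =>
        contDiff_const.mul ((hβ_smooth.of_le (by exact_mod_cast le_top)).comp (contDiff_id.div_const _))
      rw [aux_iteratedDeriv_sum _ _ _ hcd ζ]
      exact Finset.sum_congr rfl fun j _ => hterm j ζ
  refine ⟨hFs, ?_⟩
  intro n hnN ζ
  obtain ⟨m, hm⟩ : ∃ m : ℕ, ζ < 2 ^ m := pow_unbounded_of_one_lt ζ one_lt_two
  rw [hder n m ζ hm]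
  set t : ℕ → ℝ := fun j =>
    (ε (j + 1) - ε 0) * (((2 : ℝ) ^ (j + 1))⁻¹ ^ n * iteratedDeriv n β (ζ / 2 ^ (j + 1)))
    with htdef
  have habs : |ζ ^ n * (if n = 0 then ε 0 else 0)| ≤ 1 := by
    split_ifs with h
    · subst h; simpa using hεabs 0
    · simp
  set p : ℕ → Prop := fun j => 1/4 ≤ ζ / 2 ^ (j + 1) ∧ ζ / 2 ^ (j + 1) ≤ 4 with hpdef
  set S : Finset ℕ := (Finset.range (m + 1)).filter p with hSdef
  have hsum : |ζ ^ n * ∑ j ∈ Finset.range (m + 1), t j| ≤ 10 * (4 ^ n * M n) := by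
    rw [Finset.mul_sum]
    refine (Finset.abs_sum_le_sum_abs _ _).trans ?_
    have hfilter : ∑ j ∈ Finset.range (m + 1), |ζ ^ n * t j| = ∑ j ∈ S, |ζ ^ n * t j| := by
      symm
      apply Finset.sum_filter_of_ne
      intro j _ hne
      by_contra hp
      apply hne
      have hz : iteratedDeriv n β (ζ / 2 ^ (j + 1)) = 0 :=
        hBzero n _ (by simpa [hpdef, Set.mem_Icc] using hp)
      simp [htdef, hz]
    rw [hfilter]
    have hbound : ∀ j ∈ S, |ζ ^ n * t j| ≤ 2 * (4 ^ n * M n) := by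
      intro j hj
      have hpj : p j := (Finset.mem_filter.mp hj).2
      set x : ℝ := ζ / 2 ^ (j + 1) with hxdef
      have hx1 : (1/4 : ℝ) ≤ x := hpj.1
      have hx2 : x ≤ 4 := hpj.2
      have hx0 : (0 : ℝ) ≤ x := by linarith
      have hxid : ζ ^ n * ((2 : ℝ) ^ (j + 1))⁻¹ ^ n = x ^ n := by
        rw [← mul_pow, hxdef, div_eq_mul_inv]
      have hrw : ζ ^ n * t j = (ε (j + 1) - ε 0) * (x ^ n * iteratedDeriv n β x) := by
        simp only [htdef, ← hxid]
        ring
      rw [hrw, abs_mul, abs_mul, abs_pow, abs_of_nonneg hx0]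
      have h4 : x ^ n ≤ 4 ^ n := pow_le_pow_left₀ hx0 hx2 n
      have hMx := hM n x
      have hc := hcabs j
      have hB0 := abs_nonneg (iteratedDeriv n β x)
      have hc0 := abs_nonneg (ε (j + 1) - ε 0)
      have hxn : (0 : ℝ) ≤ x ^ n := by positivity
      calc |ε (j + 1) - ε 0| * (x ^ n * |iteratedDeriv n β x|)
          ≤ 2 * (x ^ n * |iteratedDeriv n β x|) :=
            mul_le_mul_of_nonneg_right hc (by positivity)
        _ ≤ 2 * (4 ^ n * M n) := by
            refine mul_le_mul_of_nonneg_left ?_ (by norm_num)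
            exact mul_le_mul h4 hMx hB0 (pow_nonneg (by norm_num) n)
    have hcard : S.card ≤ 5 := by
      rcases Finset.eq_empty_or_nonempty S with hSe | hne
      · simp [hSe]
      · set a : ℕ := S.min' hne with hadef
        have hsub : S ⊆ Finset.Icc a (a + 4) := by
          intro j hj
          have hpj : p j := (Finset.mem_filter.mp hj).2
          have hpa : p a := (Finset.mem_filter.mp (S.min'_mem hne)).2
          have haj : a ≤ j := S.min'_le j hj
          rw [Finset.mem_Icc]
          refine ⟨haj, ?_⟩
          have h2j : (0 : ℝ) < 2 ^ (j + 1) := by positivity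
          have h2a : (0 : ℝ) < 2 ^ (a + 1) := by positivity
          have e1 : (1/4 : ℝ) * 2 ^ (j + 1) ≤ ζ := (le_div_iff₀ h2j).mp hpj.1
          have e2 : ζ ≤ 4 * 2 ^ (a + 1) := by
            have := hpa.2
            rw [div_le_iff₀ h2a] at this
            linarith
          have e4 : (2 : ℝ) ^ (a + 5) = 16 * 2 ^ (a + 1) := by ring
          have e3 : (2 : ℝ) ^ (j + 1) ≤ 2 ^ (a + 5) := by linarith
          have := (pow_le_pow_iff_right₀ (a := (2 : ℝ)) one_lt_two).mp e3
          omega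
        calc S.card ≤ (Finset.Icc a (a + 4)).card := Finset.card_le_card hsub
          _ = 5 := by rw [Nat.card_Icc]; omega
    calc ∑ j ∈ S, |ζ ^ n * t j| ≤ S.card • (2 * (4 ^ n * M n)) :=
          Finset.sum_le_card_nsmul _ _ _ hbound
      _ = (S.card : ℝ) * (2 * (4 ^ n * M n)) := by rw [nsmul_eq_mul]
      _ ≤ 5 * (2 * (4 ^ n * M n)) := by
          have h5 : (S.card : ℝ) ≤ 5 := by exact_mod_cast hcard
          have hnn : (0 : ℝ) ≤ 2 * (4 ^ n * M n) := by
            have := hM0 n; positivity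
          exact mul_le_mul_of_nonneg_right h5 hnn
      _ = 10 * (4 ^ n * M n) := by ring
  calc |ζ ^ n * ((if n = 0 then ε 0 else 0) + ∑ j ∈ Finset.range (m + 1), t j)|
      ≤ |ζ ^ n * (if n = 0 then ε 0 else 0)|
        + |ζ ^ n * ∑ j ∈ Finset.range (m + 1), t j| := by
        rw [mul_add]; exact abs_add_le _ _
    _ ≤ 1 + 10 * (4 ^ n * M n) := add_le_add habs hsum
    _ ≤ C := hC1 n hnN
end

section
/- Let N be a natural number, C > 0, and let F : (0,∞) → ℂ be N-times continuously differentiable with sup_{ζ > 0} |ζ^j F^{(j)}(ζ)| ≤ C for all 0 ≤ j ≤ N. Then the function G(ζ) = F(√ζ) is N-times continuously differentiable on (0,∞) and there is a constant C', depending only on C and N, such that sup_{ζ > 0} |ζ^j G^{(j)}(ζ)| ≤ C' for all 0 ≤ j ≤ N. -/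
/-!
Both the hypothesis and the conclusion are invariant under dilations: the `j`-th derivative of
`y ↦ G (ζ * y)` at `1` is `ζ ^ j` times `G⁽ʲ⁾ ζ`. So it suffices to bound the derivatives at `1`
of `G (ζ * ·) = F_t ∘ √·`, where `t = √ζ` and `F_t = F (t * ·)`. The derivatives of `F_t` at `1`
are bounded by `C`, and Faà di Bruno's bound for a composition finishes the argument.
-/

open Set Nat

variable {E : Type*} [NormedAddCommGroup E] [NormedSpace ℝ E]

theorem norm_iteratedDerivWithin_comp_const_mul_Ioi {G : ℝ → E} {j : ℕ}
    (hG : ContDiffOn ℝ j G (Ioi 0)) {c x : ℝ} (hc : 0 < c) (hx : 0 < x) :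
    ‖iteratedDerivWithin j (fun y => G (c * y)) (Ioi 0) x‖ =
      c ^ j * ‖iteratedDerivWithin j G (Ioi 0) (c * x)‖ := by
  rw [iteratedDerivWithin_comp_const_smul (mem_Ioi.2 hx) isOpen_Ioi.uniqueDiffOn hG c
      fun y (hy : 0 < y) => mul_pos hc hy,
    norm_smul, norm_pow, Real.norm_of_nonneg hc.le]

theorem contDiffOn_sqrt_Ioi {n : WithTop ℕ∞} : ContDiffOn ℝ n Real.sqrt (Ioi 0) :=
  fun _ hx => (Real.contDiffAt_sqrt (ne_of_gt hx)).contDiffWithinAt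

/-- A `D ≥ 1` with `‖√⁽ⁱ⁾ 1‖ ≤ D ^ i` for `1 ≤ i ≤ N`, as required by Faà di Bruno's bound;
its value is irrelevant. -/
noncomputable def sqrtDerivBound (N : ℕ) : ℝ :=
  1 + ∑ i ∈ Finset.range (N + 1), ‖iteratedDerivWithin i Real.sqrt (Ioi 0) 1‖

theorem one_le_sqrtDerivBound (N : ℕ) : 1 ≤ sqrtDerivBound N :=
  le_add_of_nonneg_right (Finset.sum_nonneg fun _ _ => norm_nonneg _)

theorem norm_iteratedDerivWithin_sqrt_one_le {N i : ℕ} (hi : 1 ≤ i) (hiN : i ≤ N) :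
    ‖iteratedDerivWithin i Real.sqrt (Ioi 0) 1‖ ≤ sqrtDerivBound N ^ i :=
  calc ‖iteratedDerivWithin i Real.sqrt (Ioi 0) 1‖
      ≤ ∑ k ∈ Finset.range (N + 1), ‖iteratedDerivWithin k Real.sqrt (Ioi 0) 1‖ :=
        Finset.single_le_sum (f := fun k => ‖iteratedDerivWithin k Real.sqrt (Ioi 0) 1‖)
          (fun _ _ => norm_nonneg _) (Finset.mem_range.2 (by omega))
    _ ≤ sqrtDerivBound N := le_add_of_nonneg_left zero_le_one
    _ ≤ sqrtDerivBound N ^ i := le_self_pow₀ (one_le_sqrtDerivBound N) (by omega)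

theorem norm_iteratedDerivWithin_comp_sqrt_one_le {F : ℝ → E} {N j : ℕ}
    (hF : ContDiffOn ℝ N F (Ioi 0)) (hj : j ≤ N) {C : ℝ}
    (hC : ∀ i ≤ j, ‖iteratedDerivWithin i F (Ioi 0) 1‖ ≤ C) :
    ‖iteratedDerivWithin j (fun x => F (Real.sqrt x)) (Ioi 0) 1‖ ≤
      j ! * C * sqrtDerivBound N ^ j := by
  rw [← norm_iteratedFDerivWithin_eq_norm_iteratedDerivWithin]
  refine norm_iteratedFDerivWithin_comp_le hF contDiffOn_sqrt_Ioi (by exact_mod_cast hj)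
    isOpen_Ioi.uniqueDiffOn isOpen_Ioi.uniqueDiffOn (fun _ hx => Real.sqrt_pos.2 hx)
    (mem_Ioi.2 one_pos) (fun i hi => ?_) (fun i hi hij => ?_)
  · simpa [norm_iteratedFDerivWithin_eq_norm_iteratedDerivWithin] using hC i hi
  · rw [norm_iteratedFDerivWithin_eq_norm_iteratedDerivWithin]
    exact norm_iteratedDerivWithin_sqrt_one_le hi (hij.trans hj)

theorem mihlin_condition_sqrt_substitution_general (N : ℕ) (C : ℝ) :
    ∃ C' : ℝ,
      ∀ F : ℝ → ℂ,
        ContDiffOn ℝ N F (Ioi (0 : ℝ)) →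
        (∀ j : ℕ, j ≤ N → ∀ ζ : ℝ, 0 < ζ →
          ζ ^ j * ‖iteratedDerivWithin j F (Ioi (0 : ℝ)) ζ‖ ≤ C) →
        ContDiffOn ℝ N (fun ζ : ℝ => F (Real.sqrt ζ)) (Ioi (0 : ℝ)) ∧
        (∀ j : ℕ, j ≤ N → ∀ ζ : ℝ, 0 < ζ →
          ζ ^ j *
            ‖iteratedDerivWithin j (fun ζ : ℝ => F (Real.sqrt ζ)) (Ioi (0 : ℝ)) ζ‖ ≤ C') := by
  refine ⟨N ! * C * sqrtDerivBound N ^ N, fun F hF hb => ?_⟩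
  have hG : ContDiffOn ℝ N (fun ζ => F (Real.sqrt ζ)) (Ioi 0) :=
    hF.comp contDiffOn_sqrt_Ioi fun _ hx => Real.sqrt_pos.2 hx
  refine ⟨hG, fun j hj ζ hζ => ?_⟩
  have hC : 0 ≤ C := (norm_nonneg _).trans (by simpa using hb 0 (Nat.zero_le N) 1 one_pos)
  set t := Real.sqrt ζ
  have ht : 0 < t := Real.sqrt_pos.2 hζ
  have hFt : ContDiffOn ℝ N (fun y => F (t * y)) (Ioi 0) :=
    hF.comp (contDiff_const.mul contDiff_id).contDiffOn fun _ hy => mul_pos ht hy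
  have hFt_one (i : ℕ) (hi : i ≤ j) :
      ‖iteratedDerivWithin i (fun y => F (t * y)) (Ioi 0) 1‖ ≤ C := by
    rw [norm_iteratedDerivWithin_comp_const_mul_Ioi (hF.of_le (by exact_mod_cast hi.trans hj))
      ht one_pos, mul_one]
    exact hb i (hi.trans hj) t ht
  calc ζ ^ j * ‖iteratedDerivWithin j (fun ζ => F (Real.sqrt ζ)) (Ioi 0) ζ‖
      = ‖iteratedDerivWithin j (fun y => F (Real.sqrt (ζ * y))) (Ioi 0) 1‖ := by
        rw [norm_iteratedDerivWithin_comp_const_mul_Ioi (hG.of_le (by exact_mod_cast hj)) hζ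
          one_pos, mul_one]
    _ = ‖iteratedDerivWithin j (fun y => F (t * Real.sqrt y)) (Ioi 0) 1‖ := by
        simp only [Real.sqrt_mul hζ.le, t]
    _ ≤ j ! * C * sqrtDerivBound N ^ j := norm_iteratedDerivWithin_comp_sqrt_one_le hFt hj hFt_one
    _ ≤ N ! * C * sqrtDerivBound N ^ N := by
        have hD := one_le_sqrtDerivBound N
        gcongr

/-- If `F : (0,∞) → ℂ` is `N`-times continuously differentiable with
`sup_{ζ > 0} |ζ^j F^{(j)}(ζ)| ≤ C` for all `0 ≤ j ≤ N`, then `G(ζ) = F(√ζ)` is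
`N`-times continuously differentiable on `(0,∞)` and satisfies
`sup_{ζ > 0} |ζ^j G^{(j)}(ζ)| ≤ C'` for all `0 ≤ j ≤ N`, for a constant `C'` depending
only on `C` and `N`. -/
theorem mihlin_condition_sqrt_substitution (N : ℕ) (C : ℝ) (hC : 0 < C) :
    ∃ C' : ℝ,
      ∀ F : ℝ → ℂ,
        ContDiffOn ℝ N F (Ioi (0 : ℝ)) →
        (∀ j : ℕ, j ≤ N → ∀ ζ : ℝ, 0 < ζ →
          ζ ^ j * ‖iteratedDerivWithin j F (Ioi (0 : ℝ)) ζ‖ ≤ C) →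
        ContDiffOn ℝ N (fun ζ : ℝ => F (Real.sqrt ζ)) (Ioi (0 : ℝ)) ∧
        (∀ j : ℕ, j ≤ N → ∀ ζ : ℝ, 0 < ζ →
          ζ ^ j *
            ‖iteratedDerivWithin j (fun ζ : ℝ => F (Real.sqrt ζ)) (Ioi (0 : ℝ)) ζ‖ ≤ C') :=
  mihlin_condition_sqrt_substitution_general N C
end
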